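/- arXiv:2501.10700 — 7 statements merged into one kernel-verified Lean document; each statement's English description precedes it below -/
import Mathlib

section
/- For every 0 ≤ r ≤ m, the family of evaluation functions { mon_{S_1 ∪ ⋯ ∪ S_m} : S_i ⊆ B_i and |S_i| ≤ r' for every i ∈ {1,…,m}, and at most r of the sets S_1,…,S_m are nonempty } is a basis (a linearly independent spanning family) of the recursive subproduct code D(r,m) with base code RM(r',m'). -/
/-- Length-`(2^m')^μ` vectors, viewed as functions on `μ` blocks of `m'` binary variables. -/
abbrev Vsp (m' μ : ℕ) := (Fin μ → (Fin m' → ZMod 2)) → ZMod 2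

/-- The Reed–Muller code `RM(r', m')` : span of monomials of degree at most `r'`. -/
def RMbase (r' m' : ℕ) : Submodule (ZMod 2) ((Fin m' → ZMod 2) → ZMod 2) :=
  Submodule.span (ZMod 2)
    {c | ∃ S : Finset (Fin m'), S.card ≤ r' ∧ c = fun x => ∏ i ∈ S, x i}

/-- `(c ⊙ v)(x₁,…,x_μ,x_{μ+1}) = c(x₁,…,x_μ) · v(x_{μ+1})`. -/
def odot {m' μ : ℕ} (c : Vsp m' μ) (v : (Fin m' → ZMod 2) → ZMod 2) : Vsp m' (μ + 1) :=
  fun x => c (fun i => x i.castSucc) * v (x (Fin.last μ))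

/-- The recursive subproduct code `D(r, μ)` with base code `RM(r', m')`. -/
def Dcode (r' m' : ℕ) : ℕ → (μ : ℕ) → Submodule (ZMod 2) (Vsp m' μ)
  | _, 0 => Submodule.span (ZMod 2) {c : Vsp m' 0 | c = fun _ => 1}
  | 0, μ + 1 => Submodule.span (ZMod 2) {c : Vsp m' (μ + 1) | c = fun _ => 1}
  | _ + 1, 1 => Submodule.span (ZMod 2)
      {c : Vsp m' 1 | ∃ S : Finset (Fin m'), S.card ≤ r' ∧ c = fun x => ∏ i ∈ S, x 0 i}
  | r + 1, μ + 2 =>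
    if r + 1 < μ + 2 then
      Submodule.span (ZMod 2)
        ({w | ∃ c ∈ Dcode r' m' (r + 1) (μ + 1), w = odot c (fun _ => 1)} ∪
         {w | ∃ c ∈ Dcode r' m' r (μ + 1), ∃ v ∈ RMbase r' m', w = odot c v})
    else
      Submodule.span (ZMod 2)
        {w | ∃ c ∈ Dcode r' m' (μ + 1) (μ + 1), ∃ v ∈ RMbase r' m', w = odot c v}
  termination_by r μ => μ

/-- Monomial evaluation `mon_{S₁ ∪ ⋯ ∪ S_μ}` on the block-structured space;
a subset `S ⊆ Fin (μ·m')` is identified with a subset of `Fin μ × Fin m'`,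
the first coordinate being the block index. -/
def monP {m' μ : ℕ} (S : Finset (Fin μ × Fin m')) : Vsp m' μ :=
  fun x => ∏ p ∈ S, x p.1 p.2

/-!
Index a block monomial `mon_{S₁ ∪ ⋯ ∪ S_μ}` by its tuple of blocks `(S₁, …, S_μ)`.
Splitting off the last block factors it as `mon_{S₁ ∪ ⋯ ∪ S_{μ-1}} ⊙ mon_{S_μ}`, and the
admissibility conditions split accordingly: with `S_μ = ∅` the prefix must be admissible for `r`,
otherwise for `r - 1`. As `⊙` is bilinear, the span of `⊙`-products of two spans is the span of
`⊙`-products of their generators, so induction on `μ` along the recursion defining `D` shows that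
the admissible monomials span `D(r, μ)`. Linear independence holds because distinct square-free
monomials are linearly independent functions.
-/

open Finset Submodule

theorem linearIndependent_prod_eval (σ R : Type*) [Fintype σ] [DecidableEq σ] [CommRing R] :
    LinearIndependent R (fun S : Finset σ => fun x : σ → R => ∏ i ∈ S, x i) := by
  rw [Fintype.linearIndependent_iff]
  intro g hg S
  induction S using Finset.strongInduction with
  | H S ih =>
    -- at the indicator vector of `S` exactly the monomials of subsets of `S` evaluate to `1`
    have hS := congrFun hg fun i => if i ∈ S then 1 else 0
    simp only [Finset.sum_apply, Pi.smul_apply, smul_eq_mul, prod_boole, mul_ite, mul_one,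
      mul_zero, ← sum_filter, Pi.zero_apply] at hS
    rw [sum_eq_single_of_mem S (by simp)] at hS
    · exact hS
    · intro T hT hTS
      simp only [mem_filter, mem_univ, true_and] at hT
      exact ih T (Finset.ssubset_iff_subset_ne.2 ⟨hT, hTS⟩)

theorem span_image2_eq_of_subset_span {R M N P : Type*} [CommSemiring R]
    [AddCommMonoid M] [AddCommMonoid N] [AddCommMonoid P] [Module R M] [Module R N] [Module R P]
    (f : M →ₗ[R] N →ₗ[R] P) {s s' : Set M} {t t' : Set N} (hs : s ⊆ s')
    (hs' : s' ⊆ span R s) (ht : t ⊆ t') (ht' : t' ⊆ span R t) :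
    span R (Set.image2 (fun m n => f m n) s' t') = span R (Set.image2 (fun m n => f m n) s t) := by
  refine le_antisymm ?_ (span_mono (Set.image2_subset hs ht))
  rw [span_le, ← map₂_span_span]
  rintro _ ⟨c, hc, v, hv, rfl⟩
  exact apply_mem_map₂ f (hs' hc) (ht' hv)

theorem linearIndependent_monP (μ m' : ℕ) :
    LinearIndependent (ZMod 2) fun S : Finset (Fin μ × Fin m') => monP (m' := m') S := by
  have hsurj : Function.Surjective fun (x : Fin μ → Fin m' → ZMod 2) (p : Fin μ × Fin m') =>
      x p.1 p.2 := fun y => ⟨fun i j => y (i, j), rfl⟩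
  exact (linearIndependent_prod_eval (Fin μ × Fin m') (ZMod 2)).map'
    (LinearMap.funLeft (ZMod 2) (ZMod 2) _)
    (LinearMap.ker_eq_bot.2 (LinearMap.funLeft_injective_of_surjective _ _ _ hsurj))

def odotₗ (m' μ : ℕ) :
    Vsp m' μ →ₗ[ZMod 2] ((Fin m' → ZMod 2) → ZMod 2) →ₗ[ZMod 2] Vsp m' (μ + 1) :=
  LinearMap.mk₂ (ZMod 2) odot
    (fun _ _ _ => funext fun _ => add_mul _ _ _)
    (fun _ _ _ => funext fun _ => mul_assoc _ _ _)
    (fun _ _ _ => funext fun _ => mul_add _ _ _)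
    (fun _ _ _ => funext fun _ => mul_left_comm _ _ _)

def rmGenerators (r' m' : ℕ) : Set ((Fin m' → ZMod 2) → ZMod 2) :=
  {c | ∃ S : Finset (Fin m'), S.card ≤ r' ∧ c = fun x => ∏ i ∈ S, x i}

theorem RMbase_eq_span_rmGenerators (r' m' : ℕ) :
    RMbase r' m' = span (ZMod 2) (rmGenerators r' m') :=
  rfl

section Odot

variable {m' μ : ℕ}

theorem odotₗ_apply (c : Vsp m' μ) (v : (Fin m' → ZMod 2) → ZMod 2) :
    odotₗ m' μ c v = odot c v :=
  rfl

theorem span_setOf_odot (s : Set (Vsp m' μ)) (t : Set ((Fin m' → ZMod 2) → ZMod 2)) :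
    span (ZMod 2) {w | ∃ c ∈ span (ZMod 2) s, ∃ v ∈ span (ZMod 2) t, w = odot c v} =
      span (ZMod 2) (Set.image2 odot s t) := by
  have key := span_image2_eq_of_subset_span (odotₗ m' μ)
    (s' := span (ZMod 2) s) (t' := span (ZMod 2) t)
    subset_span subset_rfl subset_span subset_rfl
  simp only [odotₗ_apply] at key
  rw [← key]
  congr 1
  ext w
  simp [Set.mem_image2, eq_comm]

theorem span_setOf_odot_one (s : Set (Vsp m' μ)) :
    span (ZMod 2) {w | ∃ c ∈ span (ZMod 2) s, w = odot c fun _ => 1} =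
      span (ZMod 2) (Set.image2 odot s {fun _ => 1}) := by
  have key := span_image2_eq_of_subset_span (odotₗ m' μ)
    (s' := span (ZMod 2) s) (t := {fun _ => 1})
    subset_span subset_rfl subset_rfl subset_span
  simp only [odotₗ_apply] at key
  rw [← key]
  congr 1
  ext w
  simp [eq_comm]

end Odot

section Blocks

variable {m' μ : ℕ}

def blockMon (B : Fin μ → Finset (Fin m')) : Vsp m' μ :=
  fun x => ∏ i, ∏ j ∈ B i, x i j

def admissibleBlocks (m' r' r μ : ℕ) : Set (Fin μ → Finset (Fin m')) :=
  {B | (∀ i, #(B i) ≤ r') ∧ #{i | (B i).Nonempty} ≤ r}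

theorem blockMon_snoc (B : Fin μ → Finset (Fin m')) (T : Finset (Fin m')) :
    blockMon (Fin.snoc B T : Fin (μ + 1) → Finset (Fin m')) =
      odot (blockMon B) fun y => ∏ j ∈ T, y j := by
  funext x
  simp [blockMon, odot, Fin.prod_univ_castSucc]

theorem card_nonempty_snoc (B : Fin μ → Finset (Fin m')) (T : Finset (Fin m')) :
    #{i | ((Fin.snoc B T : Fin (μ + 1) → Finset (Fin m')) i).Nonempty} =
      #{i | (B i).Nonempty} + if T.Nonempty then 1 else 0 := by
  simp only [card_filter, Fin.sum_univ_castSucc, Fin.snoc_castSucc, Fin.snoc_last]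

theorem snoc_mem_admissibleBlocks {r' r : ℕ} (B : Fin μ → Finset (Fin m'))
    (T : Finset (Fin m')) :
    (Fin.snoc B T : Fin (μ + 1) → Finset (Fin m')) ∈ admissibleBlocks m' r' r (μ + 1) ↔
      (∀ i, #(B i) ≤ r') ∧ #T ≤ r' ∧
        #{i | (B i).Nonempty} + (if T.Nonempty then 1 else 0) ≤ r := by
  simp only [admissibleBlocks, Set.mem_ofPred_eq, Fin.forall_fin_succ', Fin.snoc_castSucc,
    Fin.snoc_last, card_nonempty_snoc, and_assoc]

theorem image_blockMon_admissibleBlocks_zero_left (r' μ : ℕ) :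
    blockMon '' admissibleBlocks m' r' 0 μ = {fun _ => 1} := by
  ext c
  constructor
  · rintro ⟨B, ⟨-, hB⟩, rfl⟩
    simp only [Nat.le_zero, card_eq_zero, filter_eq_empty_iff, mem_univ, true_implies,
      not_nonempty_iff_eq_empty] at hB
    funext x
    simp [blockMon, hB]
  · rintro rfl
    exact ⟨fun _ => ∅, by simp [admissibleBlocks], funext fun x => by simp [blockMon]⟩

theorem image_blockMon_admissibleBlocks_zero_right (r' r : ℕ) :
    blockMon '' admissibleBlocks m' r' r 0 = {fun _ => 1} := by
  ext c
  constructor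
  · rintro ⟨B, -, rfl⟩
    funext x
    simp [blockMon]
  · rintro rfl
    exact ⟨fun _ => ∅, by simp [admissibleBlocks], funext fun x => by simp [blockMon]⟩

theorem image_blockMon_admissibleBlocks_one (r' r : ℕ) :
    blockMon '' admissibleBlocks m' r' (r + 1) 1 =
      {c | ∃ S : Finset (Fin m'), #S ≤ r' ∧ c = fun x => ∏ i ∈ S, x 0 i} := by
  ext c
  constructor
  · rintro ⟨B, ⟨hB, -⟩, rfl⟩
    exact ⟨B 0, hB 0, funext fun x => by simp [blockMon]⟩
  · rintro ⟨S, hS, rfl⟩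
    refine ⟨fun _ => S, ⟨fun _ => hS, ?_⟩, funext fun x => by simp [blockMon]⟩
    exact (card_le_univ _).trans (by simp)

theorem image_blockMon_admissibleBlocks_succ (r' r : ℕ) :
    blockMon '' admissibleBlocks m' r' (r + 1) (μ + 1) =
      Set.image2 odot (blockMon '' admissibleBlocks m' r' (r + 1) μ) {fun _ => 1} ∪
        Set.image2 odot (blockMon '' admissibleBlocks m' r' r μ) (rmGenerators r' m') := by
  ext c
  constructor
  · rintro ⟨B', hB', rfl⟩
    induction B' using Fin.snocCases with
    | snoc B T =>
      obtain ⟨hB, hT, hcount⟩ := (snoc_mem_admissibleBlocks B T).1 hB'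
      rw [blockMon_snoc]
      by_cases hTne : T.Nonempty
      · rw [if_pos hTne] at hcount
        exact Or.inr ⟨_, ⟨B, ⟨hB, by omega⟩, rfl⟩, _, ⟨T, hT, rfl⟩, rfl⟩
      · rw [if_neg hTne, add_zero] at hcount
        rw [not_nonempty_iff_eq_empty.1 hTne]
        exact Or.inl ⟨_, ⟨B, ⟨hB, hcount⟩, rfl⟩, _, rfl, by simp⟩
  · rintro (⟨_, ⟨B, ⟨hB, hcount⟩, rfl⟩, _, rfl, rfl⟩ |
      ⟨_, ⟨B, ⟨hB, hcount⟩, rfl⟩, _, ⟨T, hT, rfl⟩, rfl⟩)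
    · refine ⟨Fin.snoc B ∅, (snoc_mem_admissibleBlocks B ∅).2 ⟨hB, by simp, by simpa⟩,
        ?_⟩
      rw [blockMon_snoc]
      simp
    · refine ⟨Fin.snoc B T, (snoc_mem_admissibleBlocks B T).2 ⟨hB, hT, ?_⟩,
        blockMon_snoc B T⟩
      split_ifs <;> omega

theorem image_blockMon_admissibleBlocks_succ_of_le {r' r : ℕ} (h : μ ≤ r) :
    blockMon '' admissibleBlocks m' r' (r + 1) (μ + 1) =
      Set.image2 odot (blockMon '' admissibleBlocks m' r' μ μ) (rmGenerators r' m') := by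
  have hcard (B : Fin μ → Finset (Fin m')) : #{i | (B i).Nonempty} ≤ μ :=
    (card_le_univ _).trans (by simp)
  ext c
  constructor
  · rintro ⟨B', hB', rfl⟩
    induction B' using Fin.snocCases with
    | snoc B T =>
      obtain ⟨hB, hT, -⟩ := (snoc_mem_admissibleBlocks B T).1 hB'
      exact ⟨_, ⟨B, ⟨hB, hcard B⟩, rfl⟩, _, ⟨T, hT, rfl⟩, (blockMon_snoc B T).symm⟩
  · rintro ⟨_, ⟨B, ⟨hB, -⟩, rfl⟩, _, ⟨T, hT, rfl⟩, rfl⟩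
    refine ⟨Fin.snoc B T, (snoc_mem_admissibleBlocks B T).2 ⟨hB, hT, ?_⟩, blockMon_snoc B T⟩
    have := hcard B
    split_ifs <;> omega

end Blocks

theorem span_blockMon_admissibleBlocks (r' m' : ℕ) :
    ∀ r μ, span (ZMod 2) (blockMon '' admissibleBlocks m' r' r μ) = Dcode r' m' r μ
  | r, 0 => by rw [image_blockMon_admissibleBlocks_zero_right, Dcode]; rfl
  | 0, μ + 1 => by rw [image_blockMon_admissibleBlocks_zero_left, Dcode]; rfl
  | r + 1, 1 => by rw [image_blockMon_admissibleBlocks_one, Dcode]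
  | r + 1, μ + 2 => by
    rw [Dcode]
    split_ifs with h
    · rw [← span_blockMon_admissibleBlocks r' m' (r + 1) (μ + 1),
        ← span_blockMon_admissibleBlocks r' m' r (μ + 1), span_union,
        span_setOf_odot_one, RMbase_eq_span_rmGenerators, span_setOf_odot, ← span_union,
        image_blockMon_admissibleBlocks_succ]
    · rw [← span_blockMon_admissibleBlocks r' m' (μ + 1) (μ + 1),
        RMbase_eq_span_rmGenerators, span_setOf_odot,
        image_blockMon_admissibleBlocks_succ_of_le (by omega)]

section Bridge

variable {m' μ : ℕ}

def blocks (S : Finset (Fin μ × Fin m')) (i : Fin μ) : Finset (Fin m') :=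
  {j | (i, j) ∈ S}

theorem monP_eq_blockMon_blocks (S : Finset (Fin μ × Fin m')) : monP S = blockMon (blocks S) :=
  funext fun x => prod_finset_product S univ (blocks S) (by simp [blocks])

theorem card_filter_fst_eq_card_blocks (S : Finset (Fin μ × Fin m')) (i : Fin μ) :
    #{p ∈ S | p.1 = i} = #(blocks S i) := by
  have h : (blocks S i).map ⟨Prod.mk i, Prod.mk_right_injective i⟩ = {p ∈ S | p.1 = i} := by
    ext ⟨a, j⟩
    simp only [mem_filter, blocks, mem_map, mem_univ, true_and, Function.Embedding.coeFn_mk,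
      Prod.mk.injEq]
    constructor
    · rintro ⟨j, h, rfl, rfl⟩; exact ⟨h, rfl⟩
    · rintro ⟨h, rfl⟩; exact ⟨j, h, rfl, rfl⟩
  rw [← h, card_map]

theorem image_fst_eq_filter_blocks_nonempty (S : Finset (Fin μ × Fin m')) :
    S.image Prod.fst = ({i | (blocks S i).Nonempty} : Finset (Fin μ)) := by
  ext i
  simp [blocks, Finset.Nonempty]

def ofBlocks (B : Fin μ → Finset (Fin m')) : Finset (Fin μ × Fin m') :=
  {p | p.2 ∈ B p.1}

theorem blocks_ofBlocks (B : Fin μ → Finset (Fin m')) : blocks (ofBlocks B) = B := by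
  funext i
  ext j
  simp [blocks, ofBlocks]

theorem range_monP_eq_image_blockMon (r' r : ℕ) :
    Set.range (fun S : {S : Finset (Fin μ × Fin m') //
        (∀ i : Fin μ, (S.filter fun p => p.1 = i).card ≤ r') ∧
          (S.image Prod.fst).card ≤ r} =>
      monP S.val) = blockMon '' admissibleBlocks m' r' r μ := by
  ext c
  constructor
  · rintro ⟨⟨S, hS, hcount⟩, rfl⟩
    refine ⟨blocks S, ⟨fun i => ?_, ?_⟩, (monP_eq_blockMon_blocks S).symm⟩
    · rw [← card_filter_fst_eq_card_blocks]; exact hS i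
    · rwa [← image_fst_eq_filter_blocks_nonempty]
  · rintro ⟨B, ⟨hB, hcount⟩, rfl⟩
    refine ⟨⟨ofBlocks B, fun i => ?_, ?_⟩, ?_⟩
    · rw [card_filter_fst_eq_card_blocks, blocks_ofBlocks]; exact hB i
    · rwa [image_fst_eq_filter_blocks_nonempty, blocks_ofBlocks]
    · exact (monP_eq_blockMon_blocks _).trans (congrArg blockMon (blocks_ofBlocks B))

end Bridge

theorem stmt_1_general (m m' r' : ℕ) (r : ℕ) :
    LinearIndependent (ZMod 2)
      (fun S : {S : Finset (Fin m × Fin m') //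
          (∀ i : Fin m, (S.filter fun p => p.1 = i).card ≤ r') ∧
          (S.image Prod.fst).card ≤ r} => monP S.val) ∧
    Submodule.span (ZMod 2)
      (Set.range (fun S : {S : Finset (Fin m × Fin m') //
          (∀ i : Fin m, (S.filter fun p => p.1 = i).card ≤ r') ∧
          (S.image Prod.fst).card ≤ r} => monP S.val)) = Dcode r' m' r m := by
  refine ⟨(linearIndependent_monP m m').comp _ Subtype.val_injective, ?_⟩
  rw [range_monP_eq_image_blockMon, span_blockMon_admissibleBlocks]

/-- for `0 ≤ r ≤ m`, the monomials `mon_{S₁ ∪ ⋯ ∪ S_m}` with `Sᵢ ⊆ Bᵢ`,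
`|Sᵢ| ≤ r'`, and at most `r` of the `Sᵢ` nonempty, form a basis (linearly independent
spanning family) of `D(r,m)` with base code `RM(r',m')`. -/
theorem stmt_1 (m m' r' : ℕ) (hm : 1 ≤ m) (hm' : 1 ≤ m') (hr'1 : 1 ≤ r') (hr'2 : r' ≤ m')
    (r : ℕ) (hr : r ≤ m) :
    LinearIndependent (ZMod 2)
      (fun S : {S : Finset (Fin m × Fin m') //
          (∀ i : Fin m, (S.filter fun p => p.1 = i).card ≤ r') ∧
          (S.image Prod.fst).card ≤ r} => monP S.val) ∧
    Submodule.span (ZMod 2)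
      (Set.range (fun S : {S : Finset (Fin m × Fin m') //
          (∀ i : Fin m, (S.filter fun p => p.1 = i).card ≤ r') ∧
          (S.image Prod.fst).card ≤ r} => monP S.val)) = Dcode r' m' r m :=
  stmt_1_general m m' r' r
end

section
/- For all m, m' ≥ 2 and n = m·m', the minimum Hamming distance of C equals 2^{n−2}; that is, every nonzero c ∈ C has wt(c) ≥ 2^{n−2}, and there exists c ∈ C with wt(c) = 2^{n−2}. -/
/-!
Every codeword of `C` is a polynomial of degree at most 2, so it suffices to know that a nonzero
`f ∈ RM(r, n)` has weight at least `2^(n-r)`. Splitting on the first coordinate writes `f = (u | v)`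
with `u, v ∈ RM(r, n-1)` and `u + v ∈ RM(r-1, n-1)` (Plotkin's decomposition): if `u + v = 0` then
`wt f = 2 wt u`, and otherwise `wt f ≥ wt (u + v)`; induction on `n` finishes. The bound is attained
by `x_i x_j` with `i`, `j` in different blocks.
-/

/-- Monomial evaluation: `mon_S(α) = ∏_{i ∈ S} α i`. -/
def mon {n : ℕ} (S : Finset (Fin n)) : (Fin n → ZMod 2) → ZMod 2 :=
  fun x => ∏ i ∈ S, x i

/-- The Reed–Muller code `RM(r, n)` : span of the monomials of degree at most `r`. -/
def RMcode (r n : ℕ) : Submodule (ZMod 2) ((Fin n → ZMod 2) → ZMod 2) :=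
  Submodule.span (ZMod 2) {c | ∃ S : Finset (Fin n), S.card ≤ r ∧ c = mon S}

/-- The second-order recursive subproduct code `C = RM(1,m')^{⊗[2,m]}` of length `2^{m·m'}`:
span of the monomials `mon_S` with `|S| ≤ 2` and `|S ∩ Bᵢ| ≤ 1` for every block
`Bᵢ = {(i−1)·m', …, i·m'−1}` (an index `i : Fin (m·m')` lies in block `(i : ℕ) / m'`). -/
def Ccode (m m' : ℕ) : Submodule (ZMod 2) ((Fin (m * m') → ZMod 2) → ZMod 2) :=
  Submodule.span (ZMod 2) {c | ∃ S : Finset (Fin (m * m')),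
    S.card ≤ 2 ∧ (∀ b : ℕ, (S.filter fun i : Fin (m * m') => (i : ℕ) / m' = b).card ≤ 1) ∧ c = mon S}

/-- Hamming weight: the number of evaluation points where `c` takes the value `1`. -/
def wt {n : ℕ} (c : (Fin n → ZMod 2) → ZMod 2) : ℕ :=
  (Finset.univ.filter fun x => c x = 1).card

lemma ZMod.ne_zero_iff_eq_one (a : ZMod 2) : a ≠ 0 ↔ a = 1 := by
  revert a; decide

lemma wt_pos {n : ℕ} {f : (Fin n → ZMod 2) → ZMod 2} (hf : f ≠ 0) : 0 < wt f := by
  obtain ⟨x, hx⟩ := Function.ne_iff.mp hf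
  exact Finset.card_pos.mpr ⟨x, by simpa [← ZMod.ne_zero_iff_eq_one] using hx⟩

lemma wt_add_le {n : ℕ} (f g : (Fin n → ZMod 2) → ZMod 2) : wt (f + g) ≤ wt f + wt g := by
  refine (Finset.card_le_card fun x hx => ?_).trans (Finset.card_union_le _ _)
  revert hx
  simp only [Finset.mem_filter, Finset.mem_univ, true_and, Finset.mem_union, Pi.add_apply]
  generalize f x = a; generalize g x = b
  revert a b; decide

lemma mon_eq_one_iff {n : ℕ} (S : Finset (Fin n)) (x : Fin n → ZMod 2) :
    mon S x = 1 ↔ ∀ i ∈ S, x i = 1 := by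
  simp only [mon, ← ZMod.ne_zero_iff_eq_one, Finset.prod_ne_zero_iff]

lemma wt_mon {n : ℕ} (S : Finset (Fin n)) : wt (mon S) = 2 ^ (n - S.card) := by
  have hsupp : (Finset.univ.filter fun x => mon S x = 1) =
      Fintype.piFinset fun i => if i ∈ S then {1} else Finset.univ := by
    ext x
    simp only [Finset.mem_filter, Finset.mem_univ, true_and, mon_eq_one_iff,
      Fintype.mem_piFinset]
    refine ⟨fun h i => ?_, fun h i hi => by simpa [hi] using h i⟩
    split_ifs with hi
    · simpa using h i hi
    · exact Finset.mem_univ _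
  rw [wt, hsupp, Fintype.card_piFinset]
  simp [apply_ite Finset.card, Finset.prod_ite, Finset.filter_not, Finset.card_univ_sdiff]

def restrictHead {n : ℕ} (a : ZMod 2) :
    ((Fin (n + 1) → ZMod 2) → ZMod 2) →ₗ[ZMod 2] ((Fin n → ZMod 2) → ZMod 2) :=
  LinearMap.funLeft (ZMod 2) (ZMod 2) fun y => Fin.cons a y

lemma restrictHead_apply {n : ℕ} (a : ZMod 2) (f : (Fin (n + 1) → ZMod 2) → ZMod 2)
    (y : Fin n → ZMod 2) : restrictHead a f y = f (Fin.cons a y) := rfl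

lemma restrictHead_mon {n : ℕ} (a : ZMod 2) (S : Finset (Fin (n + 1))) :
    restrictHead a (mon S) =
      (if 0 ∈ S then a else 1) • mon (S.preimage Fin.succ (Fin.succ_injective n).injOn) := by
  funext y
  rw [restrictHead_apply, Pi.smul_apply, smul_eq_mul, mon, mon, ← Fintype.prod_ite_mem S,
    ← Fintype.prod_ite_mem (S.preimage _ _), Fin.prod_univ_succ]
  by_cases h0 : 0 ∈ S <;> simp [h0]

lemma card_preimage_succ_le {n : ℕ} (S : Finset (Fin (n + 1))) :
    (S.preimage Fin.succ (Fin.succ_injective n).injOn).card ≤ (S.erase 0).card :=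
  Finset.card_le_card_of_injOn Fin.succ (fun i hi => by simpa [Fin.succ_ne_zero] using hi)
    (Fin.succ_injective n).injOn

lemma restrictHead_mem_RMcode {n r : ℕ} (a : ZMod 2) {f : (Fin (n + 1) → ZMod 2) → ZMod 2}
    (hf : f ∈ RMcode r (n + 1)) : restrictHead a f ∈ RMcode r n := by
  suffices RMcode r (n + 1) ≤ (RMcode r n).comap (restrictHead a) from this hf
  refine Submodule.span_le.mpr ?_
  rintro _ ⟨S, hS, rfl⟩
  rw [SetLike.mem_coe, Submodule.mem_comap, restrictHead_mon]
  refine Submodule.smul_mem _ _ (Submodule.subset_span ⟨_, ?_, rfl⟩)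
  exact (card_preimage_succ_le S).trans (Finset.card_erase_le.trans hS)

lemma restrictHead_add_mem_RMcode {n r : ℕ} {f : (Fin (n + 1) → ZMod 2) → ZMod 2}
    (hf : f ∈ RMcode (r + 1) (n + 1)) : restrictHead 0 f + restrictHead 1 f ∈ RMcode r n := by
  suffices RMcode (r + 1) (n + 1) ≤ (RMcode r n).comap (restrictHead 0 + restrictHead 1) from
    this hf
  refine Submodule.span_le.mpr ?_
  rintro _ ⟨S, hS, rfl⟩
  rw [SetLike.mem_coe, Submodule.mem_comap, LinearMap.add_apply, restrictHead_mon,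
    restrictHead_mon, ← add_smul]
  by_cases h0 : 0 ∈ S
  · rw [if_pos h0, if_pos h0, zero_add, one_smul]
    refine Submodule.subset_span ⟨_, ?_, rfl⟩
    have := card_preimage_succ_le S
    rw [Finset.card_erase_of_mem h0] at this
    omega
  · rw [if_neg h0, if_neg h0, CharTwo.add_self_eq_zero, zero_smul]
    exact Submodule.zero_mem _

lemma wt_eq_wt_restrictHead_add {n : ℕ} (f : (Fin (n + 1) → ZMod 2) → ZMod 2) :
    wt f = wt (restrictHead 0 f) + wt (restrictHead 1 f) := by
  simp only [wt, Finset.card_filter]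
  rw [← (Fin.consEquiv fun _ => ZMod 2).sum_comp, Fintype.sum_prod_type]
  exact Fin.sum_univ_two _

lemma eq_mon_empty_of_mem_RMcode_zero {n : ℕ} {f : (Fin n → ZMod 2) → ZMod 2}
    (hf : f ∈ RMcode 0 n) (hf0 : f ≠ 0) : f = mon ∅ := by
  have hgen : {c | ∃ S : Finset (Fin n), S.card ≤ 0 ∧ c = mon S} = {mon ∅} := by
    ext c
    simp [Finset.card_eq_zero]
  rw [RMcode, hgen, Submodule.mem_span_singleton] at hf
  obtain ⟨t, rfl⟩ := hf
  have : t ≠ 0 := by rintro rfl; exact hf0 (zero_smul _ _)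
  rw [(ZMod.ne_zero_iff_eq_one t).mp this, one_smul]

theorem two_pow_sub_le_wt_of_mem_RMcode {n r : ℕ} {f : (Fin n → ZMod 2) → ZMod 2}
    (hf : f ∈ RMcode r n) (hf0 : f ≠ 0) : 2 ^ (n - r) ≤ wt f := by
  induction n generalizing r with
  | zero => rw [Nat.zero_sub, pow_zero]; exact wt_pos hf0
  | succ n ih =>
    obtain _ | r := r
    · rw [eq_mon_empty_of_mem_RMcode_zero hf hf0, wt_mon, Finset.card_empty]
    have hwt := wt_eq_wt_restrictHead_add f
    have hu := restrictHead_mem_RMcode 0 hf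
    have huv := restrictHead_add_mem_RMcode hf
    generalize restrictHead 0 f = u at hwt hu huv
    generalize restrictHead 1 f = v at hwt huv
    rw [hwt]
    by_cases huv0 : u + v = 0
    · obtain rfl : u = v := CharTwo.add_eq_zero.mp huv0
      have hu0 : u ≠ 0 := by
        rintro rfl
        exact (wt_pos hf0).ne' (by simpa [wt] using hwt)
      have := ih hu hu0
      calc 2 ^ (n + 1 - (r + 1)) ≤ 2 * 2 ^ (n - (r + 1)) := by
            rw [← pow_succ']; exact Nat.pow_le_pow_right two_pos (by omega)
        _ ≤ wt u + wt u := by omega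
    · calc 2 ^ (n + 1 - (r + 1)) = 2 ^ (n - r) := by rw [Nat.add_sub_add_right]
        _ ≤ wt (u + v) := ih huv huv0
        _ ≤ wt u + wt v := wt_add_le u v

lemma Ccode_le_RMcode_two (m m' : ℕ) : Ccode m m' ≤ RMcode 2 (m * m') :=
  Submodule.span_mono fun _ ⟨S, hS, _, hc⟩ => ⟨S, hS, hc⟩

lemma mon_pair_mem_Ccode {m m' : ℕ} {i j : Fin (m * m')} (hij : (i : ℕ) / m' ≠ j / m') :
    mon {i, j} ∈ Ccode m m' := by
  refine Submodule.subset_span ⟨{i, j}, Finset.card_le_two, fun b => ?_, rfl⟩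
  refine Finset.card_le_one.mpr fun a ha c hc => ?_
  simp only [Finset.mem_filter, Finset.mem_insert, Finset.mem_singleton] at ha hc
  rcases ha with ⟨rfl | rfl, ha⟩ <;> rcases hc with ⟨rfl | rfl, hc⟩ <;> first | rfl | omega

/-- the minimum Hamming distance of `C` equals `2^{n−2}` for `n = m·m'`. -/
theorem stmt_5 (m m' : ℕ) (hm : 2 ≤ m) (hm' : 2 ≤ m') :
    (∀ c ∈ Ccode m m', c ≠ 0 → 2 ^ (m * m' - 2) ≤ wt c) ∧
    (∃ c ∈ Ccode m m', wt c = 2 ^ (m * m' - 2)) := by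
  refine ⟨fun c hc hc0 => two_pow_sub_le_wt_of_mem_RMcode (Ccode_le_RMcode_two m m' hc) hc0, ?_⟩
  have hm'_lt : m' < m * m' := by nlinarith
  let i : Fin (m * m') := ⟨0, by omega⟩
  let j : Fin (m * m') := ⟨m', hm'_lt⟩
  refine ⟨mon {i, j}, mon_pair_mem_Ccode ?_, ?_⟩
  · simp [i, j, Nat.div_self (by omega : 0 < m')]
  · rw [wt_mon, Finset.card_pair (by simp [i, j, Fin.ext_iff]; omega)]
end

section
/- Let m, m' ≥ 2 and n = m·m'. The number of 2×n matrices A over ZMod 2 such that rank(A) = 2 and rank(A_i) ≤ 1 for every i ∈ {1,…,m} equals (3·2^{m'} − 2)^m − (3·2^{n} − 2). -/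
/-!
A `2 × n` matrix has rank `2` exactly when its rows are linearly independent, and rank `≤ 1`
exactly when they are dependent. Over a field with `q` elements, a pair of vectors in a space
with `N` elements is dependent in `N² - (N - 1)(N - q) = (q + 1)N - q` cases. Matrices all of
whose blocks have dependent rows are tuples of `m` independent choices, giving
`((q + 1)q^{m'} - q)^m` of them; those with dependent rows overall are among them, and
subtracting their number `(q + 1)q^n - q` leaves the count, at `q = 2`.
-/

/-- The `2 × m'` submatrix `A_b` of a `2 × (m·m')` matrix `A`, formed by the columns
indexed by block `B_b` (the indices `i` with `(i : ℕ) / m' = b`). -/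
def blockMat (m m' : ℕ) (A : Matrix (Fin 2) (Fin (m * m')) (ZMod 2)) (b : ℕ) :
    Matrix (Fin 2) {i : Fin (m * m') // (i : ℕ) / m' = b} (ZMod 2) :=
  A.submatrix id Subtype.val

open Matrix

theorem Nat.card_subtype_and_add_card_subtype_not {α : Type*} [Finite α] {p q : α → Prop}
    (h : ∀ x, ¬ p x → q x) :
    Nat.card {x // p x ∧ q x} + Nat.card {x // ¬ p x} = Nat.card {x // q x} := by
  classical
  rw [← Nat.card_sum, ← Nat.card_congr (Equiv.sumCompl fun x : {x // q x} => p x)]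
  exact Nat.card_congr <| Equiv.sumCongr
    ((Equiv.subtypeEquivRight fun _ => and_comm).trans
      (Equiv.subtypeSubtypeEquivSubtypeInter q p).symm)
    (Equiv.subtypeSubtypeEquivSubtype (h _)).symm

section LinearAlgebra

variable {K : Type*} [Field K]

theorem Matrix.rank_eq_card_iff_linearIndependent_row {m n : Type*} [Fintype m] [Fintype n]
    (A : Matrix m n K) : A.rank = Fintype.card m ↔ LinearIndependent K A.row := by
  rw [A.rank_eq_finrank_span_row, linearIndependent_iff_card_eq_finrank_span, Set.finrank, eq_comm]

theorem Matrix.rank_le_one_iff_not_linearIndependent_row {n : Type*} [Fintype n]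
    (A : Matrix (Fin 2) n K) : A.rank ≤ 1 ↔ ¬ LinearIndependent K A.row := by
  rw [← A.rank_eq_card_iff_linearIndependent_row, Fintype.card_fin]
  have := A.rank_le_card_height
  rw [Fintype.card_fin] at this
  omega

theorem LinearIndependent.of_row_submatrix {R m n n' : Type*} [CommRing R] {A : Matrix m n R}
    (f : n' → n) (h : LinearIndependent R (A.submatrix id f).row) : LinearIndependent R A.row :=
  h.of_comp (LinearMap.funLeft R R f)

variable [Fintype K] {V : Type*} [AddCommGroup V] [Module K V] [Finite V]

theorem card_linearIndependent_fin_two :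
    (Nat.card {v : Fin 2 → V // LinearIndependent K v} : ℤ) =
      (Nat.card V - 1) * (Nat.card V - Fintype.card K) := by
  have : Fintype V := Fintype.ofFinite V
  rw [Nat.card_eq_fintype_card (α := V), Module.card_eq_pow_finrank (K := K)]
  by_cases hV : 2 ≤ Module.finrank K V
  · have h1 : 1 ≤ Fintype.card K ^ Module.finrank K V := Nat.one_le_pow _ _ Fintype.card_pos
    have hq : Fintype.card K ≤ Fintype.card K ^ Module.finrank K V :=
      Nat.le_self_pow (by omega) _
    rw [card_linearIndependent hV, Fin.prod_univ_two]
    push_cast [Fin.val_zero, Fin.val_one, pow_zero, pow_one, Nat.cast_sub h1, Nat.cast_sub hq]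
    ring
  · -- below dimension two there are no independent pairs, and `Nat.card V ∈ {1, q}`
    have hempty : IsEmpty {v : Fin 2 → V // LinearIndependent K v} :=
      ⟨fun v => hV (by simpa using v.2.fintype_card_le_finrank)⟩
    rw [Nat.card_of_isEmpty]
    interval_cases Module.finrank K V <;> simp

theorem card_not_linearIndependent_fin_two :
    (Nat.card {v : Fin 2 → V // ¬ LinearIndependent K v} : ℤ) =
      (Fintype.card K + 1) * Nat.card V - Fintype.card K := by
  have h := Nat.card_subtype_and_add_card_subtype_not (α := Fin 2 → V)
    (p := fun v => LinearIndependent K v) (q := fun _ => True) fun _ _ => trivial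
  simp only [and_true] at h
  rw [Nat.card_congr (Equiv.subtypeUnivEquiv fun _ => trivial), Nat.card_fun, Nat.card_fin] at h
  have h' := congrArg (Nat.cast : ℕ → ℤ) h
  push_cast [card_linearIndependent_fin_two] at h'
  linear_combination h'

theorem card_not_linearIndependent_row (ι : Type*) [Fintype ι] :
    (Nat.card {A : Matrix (Fin 2) ι K // ¬ LinearIndependent K A.row} : ℤ) =
      (Fintype.card K + 1) * Fintype.card K ^ Fintype.card ι - Fintype.card K := by
  have h := card_not_linearIndependent_fin_two (K := K) (V := ι → K)
  rwa [Nat.card_fun, Nat.card_eq_fintype_card (α := K), Nat.card_eq_fintype_card (α := ι),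
    Nat.cast_pow] at h

end LinearAlgebra

/-- Column `j + m' * b` of `A` becomes column `j` of block `b`. -/
def blocksEquiv (ρ α : Type*) (m m' : ℕ) :
    Matrix ρ (Fin (m * m')) α ≃ (Fin m → Matrix ρ (Fin m') α) where
  toFun A b := A.submatrix id fun j => finProdFinEquiv (b, j)
  invFun B := Matrix.of fun r i => B (finProdFinEquiv.symm i).1 r (finProdFinEquiv.symm i).2
  left_inv A := by ext r i; exact congrArg (A r) (finProdFinEquiv.apply_symm_apply i)
  right_inv B := by
    ext b r j
    simp only [Matrix.of_apply, Matrix.submatrix_apply, id, Equiv.symm_apply_apply]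

section Blocks

variable {m m' : ℕ}

def blockIndexEquiv (b : Fin m) : Fin m' ≃ {i : Fin (m * m') // (i : ℕ) / m' = b} where
  toFun j := ⟨finProdFinEquiv (b, j), by
    rw [← Fin.coe_divNat]
    exact congrArg (fun x => (x.1 : ℕ)) (finProdFinEquiv.symm_apply_apply (b, j))⟩
  invFun i := i.1.modNat
  left_inv j := congrArg Prod.snd (finProdFinEquiv.symm_apply_apply (b, j))
  right_inv i := by
    have hb : i.1.divNat = b := Fin.ext (by rw [Fin.coe_divNat, i.2])
    ext1
    simpa [hb] using finProdFinEquiv.apply_symm_apply i.1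

theorem rank_blockMat (A : Matrix (Fin 2) (Fin (m * m')) (ZMod 2)) {b : ℕ} (hb : b < m) :
    (blockMat m m' A b).rank = (blocksEquiv (Fin 2) (ZMod 2) m m' A ⟨b, hb⟩).rank := by
  rw [← (blockMat m m' A b).rank_submatrix (Equiv.refl _) (blockIndexEquiv ⟨b, hb⟩)]
  rfl

end Blocks

theorem card_linearIndependent_row_and_forall_blocks_not (K : Type*) [Field K] [Fintype K]
    (m m' : ℕ) :
    (Nat.card {A : Matrix (Fin 2) (Fin (m * m')) K // LinearIndependent K A.row ∧
        ∀ b, ¬ LinearIndependent K (blocksEquiv (Fin 2) K m m' A b).row} : ℤ) =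
      ((Fintype.card K + 1) * Fintype.card K ^ m' - Fintype.card K) ^ m -
        ((Fintype.card K + 1) * Fintype.card K ^ (m * m') - Fintype.card K) := by
  have hsplit := Nat.card_subtype_and_add_card_subtype_not
    (p := fun A : Matrix (Fin 2) (Fin (m * m')) K => LinearIndependent K A.row)
    (q := fun A => ∀ b, ¬ LinearIndependent K (blocksEquiv (Fin 2) K m m' A b).row)
    fun A hA b hb => hA (hb.of_row_submatrix (A := A) _)
  have hblocks : Nat.card {A : Matrix (Fin 2) (Fin (m * m')) K //
        ∀ b, ¬ LinearIndependent K (blocksEquiv (Fin 2) K m m' A b).row} =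
      Nat.card {B : Matrix (Fin 2) (Fin m') K // ¬ LinearIndependent K B.row} ^ m := by
    rw [Nat.card_congr ((blocksEquiv (Fin 2) K m m').subtypeEquiv
        (q := fun B => ∀ b, ¬ LinearIndependent K (B b).row) fun _ => Iff.rfl),
      Nat.card_congr (Equiv.subtypePiEquivPi (β := fun _ : Fin m => Matrix (Fin 2) (Fin m') K)
        (p := fun _ B => ¬ LinearIndependent K B.row)), Nat.card_fun, Nat.card_fin]
  have h' := congrArg (Nat.cast : ℕ → ℤ) hsplit
  push_cast [hblocks] at h'
  rw [card_not_linearIndependent_row, card_not_linearIndependent_row, Fintype.card_fin,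
    Fintype.card_fin] at h'
  linear_combination h'

theorem stmt_8_general (m m' : ℕ) :
    (Nat.card {A : Matrix (Fin 2) (Fin (m * m')) (ZMod 2) //
        A.rank = 2 ∧ ∀ b : ℕ, b < m → (blockMat m m' A b).rank ≤ 1} : ℤ) =
      (3 * 2 ^ m' - 2) ^ m - (3 * 2 ^ (m * m') - 2) := by
  have hcond : ∀ A : Matrix (Fin 2) (Fin (m * m')) (ZMod 2),
      (A.rank = 2 ∧ ∀ b : ℕ, b < m → (blockMat m m' A b).rank ≤ 1) ↔
        (LinearIndependent (ZMod 2) A.row ∧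
          ∀ b, ¬ LinearIndependent (ZMod 2) (blocksEquiv (Fin 2) (ZMod 2) m m' A b).row) := by
    intro A
    rw [← A.rank_eq_card_iff_linearIndependent_row, Fintype.card_fin, Fin.forall_iff]
    refine and_congr Iff.rfl (forall₂_congr fun b hb => ?_)
    rw [rank_blockMat A hb, rank_le_one_iff_not_linearIndependent_row]
  rw [Nat.card_congr (Equiv.subtypeEquivRight hcond),
    card_linearIndependent_row_and_forall_blocks_not, ZMod.card]
  norm_num

/-- the number of `2 × (m·m')` matrices over `ZMod 2` with `rank(A) = 2` and
`rank(A_i) ≤ 1` for every block `i` equals `(3·2^{m'} − 2)^m − (3·2^{m·m'} − 2)`. -/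
theorem stmt_8 (m m' : ℕ) (hm : 2 ≤ m) (hm' : 2 ≤ m') :
    (Nat.card {A : Matrix (Fin 2) (Fin (m * m')) (ZMod 2) //
        A.rank = 2 ∧ ∀ b : ℕ, b < m → (blockMat m m' A b).rank ≤ 1} : ℤ) =
      (3 * 2 ^ m' - 2) ^ m - (3 * 2 ^ (m * m') - 2) :=
  stmt_8_general m m'
end

section
/- Let m, m' ≥ 2 and n = m·m'. Every codeword c ∈ C can be written uniquely as c = r + q_B, where r ∈ RM(1,n) and q_B = Σ_{i<j} B_{ij}·mon_{{i,j}} for a unique matrix B ∈ 𝓑_{m,m'} (the sum taken over pairs i < j in Fin n). Consequently, the map B ↦ (q_B + RM(1,n)) is a bijection from 𝓑_{m,m'} onto the set of cosets of RM(1,n) contained in C. -/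
/-- `B ∈ 𝓑_{m,m'}`: `B` is a symmetric `(m·m') × (m·m')` matrix over `ZMod 2` whose `m`
diagonal `m' × m'` blocks are zero (indices `i, j` lie in the same block iff
`(i : ℕ)/m' = (j : ℕ)/m'`). -/
def isB (m m' : ℕ) (B : Matrix (Fin (m * m')) (Fin (m * m')) (ZMod 2)) : Prop :=
  (∀ i j, B i j = B j i) ∧
  ∀ i j : Fin (m * m'), (i : ℕ) / m' = (j : ℕ) / m' → B i j = 0

/-- `q_B = Σ_{i<j} B_{ij} · mon_{{i,j}}`. -/
def qB (m m' : ℕ) (B : Matrix (Fin (m * m')) (Fin (m * m')) (ZMod 2)) :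
    (Fin (m * m') → ZMod 2) → ZMod 2 :=
  fun x => ∑ p ∈ Finset.univ.filter (fun p : Fin (m * m') × Fin (m * m') => p.1 < p.2),
    B p.1 p.2 * mon {p.1, p.2} x

section Helpers

variable {N : ℕ}

/-- The full coefficient-to-function operator: `Fc a = ∑_S a_S · mon_S`. -/
def Fc (a : Finset (Fin N) → ZMod 2) : (Fin N → ZMod 2) → ZMod 2 :=
  fun x => ∑ S : Finset (Fin N), a S * mon S x

lemma Fc_eq_sum_smul (a : Finset (Fin N) → ZMod 2) :
    Fc a = ∑ S : Finset (Fin N), a S • mon S := by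
  funext x
  simp [Fc, Finset.sum_apply]

lemma mon_chi (S T : Finset (Fin N)) :
    mon S (fun i => if i ∈ T then (1 : ZMod 2) else 0) = if S ⊆ T then 1 else 0 := by
  unfold mon
  by_cases h : S ⊆ T
  · rw [if_pos h]
    exact Finset.prod_eq_one fun i hi => if_pos (h hi)
  · rw [if_neg h]
    obtain ⟨i, hiS, hiT⟩ := Finset.not_subset.mp h
    exact Finset.prod_eq_zero hiS (if_neg hiT)

lemma Fc_eq_zero {a : Finset (Fin N) → ZMod 2} (h : Fc a = 0) : a = 0 := by
  funext T
  show a T = 0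
  induction T using Finset.strongInduction with
  | _ T ih =>
    have hx := congrFun h (fun i => if i ∈ T then (1 : ZMod 2) else 0)
    simp only [Fc, Pi.zero_apply] at hx
    rw [Finset.sum_congr rfl (fun S _ => by rw [mon_chi S T])] at hx
    have hx' : ∑ S ∈ Finset.univ.filter (fun S : Finset (Fin N) => S ⊆ T), a S = 0 := by
      rw [← hx, Finset.sum_filter]
      exact Finset.sum_congr rfl fun S _ => by
        by_cases hST : S ⊆ T <;> simp [hST]
    have hsingle : ∑ S ∈ Finset.univ.filter (fun S : Finset (Fin N) => S ⊆ T), a S = a T :=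
      Finset.sum_eq_single_of_mem T (Finset.mem_filter.mpr ⟨Finset.mem_univ _, subset_rfl⟩)
        (fun S hS hne => ih S (lt_of_le_of_ne (Finset.mem_filter.mp hS).2 hne))
    rw [hsingle] at hx'
    exact hx'

lemma Fc_inj {a b : Finset (Fin N) → ZMod 2} (h : Fc a = Fc b) : a = b := by
  have hsub : Fc (a - b) = 0 := by
    funext x
    have := congrFun h x
    simp only [Fc, Pi.sub_apply, sub_mul, Finset.sum_sub_distrib, Pi.zero_apply]
    simp only [Fc] at this
    rw [this, sub_self]
  have := Fc_eq_zero hsub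
  exact sub_eq_zero.mp this

lemma Fc_add (a b : Finset (Fin N) → ZMod 2) : Fc (a + b) = Fc a + Fc b := by
  funext x
  simp [Fc, add_mul, Finset.sum_add_distrib]

lemma mem_span_of_coeff (P : Finset (Fin N) → Prop) (a : Finset (Fin N) → ZMod 2)
    (ha : ∀ S, ¬ P S → a S = 0) :
    Fc a ∈ Submodule.span (ZMod 2) {c | ∃ S, P S ∧ c = mon S} := by
  rw [Fc_eq_sum_smul]
  refine Submodule.sum_mem _ fun S _ => ?_
  by_cases hP : P S
  · exact Submodule.smul_mem _ _ (Submodule.subset_span ⟨S, hP, rfl⟩)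
  · rw [ha S hP, zero_smul]
    exact Submodule.zero_mem _

lemma coeff_of_mem_span (P : Finset (Fin N) → Prop)
    {c : (Fin N → ZMod 2) → ZMod 2}
    (hc : c ∈ Submodule.span (ZMod 2) {c | ∃ S, P S ∧ c = mon S}) :
    ∃ a : Finset (Fin N) → ZMod 2, (∀ S, ¬ P S → a S = 0) ∧ c = Fc a := by
  have hset : {c : (Fin N → ZMod 2) → ZMod 2 | ∃ S, P S ∧ c = mon S} = mon '' {S | P S} := by
    ext c
    constructor
    · rintro ⟨S, hS, rfl⟩; exact ⟨S, hS, rfl⟩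
    · rintro ⟨S, hS, rfl⟩; exact ⟨S, hS, rfl⟩
  rw [hset] at hc
  obtain ⟨l, hl, hlc⟩ := (Finsupp.mem_span_image_iff_linearCombination _).mp hc
  refine ⟨⇑l, ?_, ?_⟩
  · intro S hS
    by_contra h
    exact hS (hl (Finsupp.mem_support_iff.mpr h))
  · rw [← hlc, Finsupp.linearCombination_apply, Finsupp.sum, Fc_eq_sum_smul]
    exact Finset.sum_subset (Finset.subset_univ _) fun S _ hS => by
      rw [Finsupp.notMem_support_iff.mp hS, zero_smul]

/-- The coefficient function of `q_B`. -/
def qcoef (B : Matrix (Fin N) (Fin N) (ZMod 2)) (S : Finset (Fin N)) : ZMod 2 :=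
  ∑ p ∈ Finset.univ.filter
    (fun p : Fin N × Fin N => p.1 < p.2 ∧ ({p.1, p.2} : Finset (Fin N)) = S), B p.1 p.2

lemma pair_fiber (i j : Fin N) (hij : i < j) :
    Finset.univ.filter
      (fun p : Fin N × Fin N => p.1 < p.2 ∧ ({p.1, p.2} : Finset (Fin N)) = {i, j})
      = {(i, j)} := by
  ext ⟨x, y⟩
  simp only [Finset.mem_filter, Finset.mem_univ, true_and, Finset.mem_singleton]
  constructor
  · rintro ⟨hlt, heq⟩
    have h1 : x ∈ ({i, j} : Finset (Fin N)) := heq ▸ (by simp)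
    have h2 : y ∈ ({i, j} : Finset (Fin N)) := heq ▸ (by simp)
    simp only [Finset.mem_insert, Finset.mem_singleton] at h1 h2
    rcases h1 with rfl | rfl <;> rcases h2 with rfl | rfl
    · exact absurd hlt (lt_irrefl _)
    · rfl
    · exact absurd hij (not_lt.mpr hlt.le)
    · exact absurd hlt (lt_irrefl _)
  · rintro h
    rw [Prod.ext_iff] at h
    obtain ⟨rfl, rfl⟩ := h
    exact ⟨hij, rfl⟩

lemma qcoef_pair (B : Matrix (Fin N) (Fin N) (ZMod 2)) (i j : Fin N) (hij : i < j) :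
    qcoef B {i, j} = B i j := by
  unfold qcoef
  rw [pair_fiber i j hij, Finset.sum_singleton]

lemma qcoef_of_card_ne (B : Matrix (Fin N) (Fin N) (ZMod 2)) (S : Finset (Fin N))
    (hS : S.card ≠ 2) : qcoef B S = 0 := by
  unfold qcoef
  rw [Finset.filter_false_of_mem, Finset.sum_empty]
  rintro p - ⟨hlt, heq⟩
  exact hS (heq ▸ Finset.card_pair (ne_of_lt hlt))

end Helpers

lemma qB_eq_Fc (m m' : ℕ) (B : Matrix (Fin (m * m')) (Fin (m * m')) (ZMod 2)) :
    qB m m' B = Fc (qcoef B) := by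
  funext x
  unfold qB
  rw [← Finset.sum_fiberwise_of_maps_to
    (g := fun p : Fin (m * m') × Fin (m * m') => ({p.1, p.2} : Finset (Fin (m * m'))))
    (t := Finset.univ) (fun p _ => Finset.mem_univ _)
    (fun p => B p.1 p.2 * mon {p.1, p.2} x)]
  show _ = ∑ S : Finset (Fin (m * m')), qcoef B S * mon S x
  refine Finset.sum_congr rfl fun S _ => ?_
  rw [Finset.filter_filter]
  unfold qcoef
  rw [Finset.sum_mul]
  refine Finset.sum_congr rfl fun p hp => ?_
  simp only [Finset.mem_filter] at hp
  rw [hp.2.2]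

/-- every codeword `c ∈ C` can be written uniquely as `c = r + q_B` with
`r ∈ RM(1,n)` and `B ∈ 𝓑_{m,m'}`; moreover every `q_B` lies in `C`, so `B ↦ q_B + RM(1,n)`
is a bijection from `𝓑_{m,m'}` onto the cosets of `RM(1,n)` contained in `C`. -/
theorem stmt_11 (m m' : ℕ) (hm : 2 ≤ m) (hm' : 2 ≤ m') :
    (∀ B, isB m m' B → qB m m' B ∈ Ccode m m') ∧
    ∀ c ∈ Ccode m m',
      ∃! p : Matrix (Fin (m * m')) (Fin (m * m')) (ZMod 2) ×
          ((Fin (m * m') → ZMod 2) → ZMod 2),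
        isB m m' p.1 ∧ p.2 ∈ RMcode 1 (m * m') ∧ c = p.2 + qB m m' p.1 := by
  classical
  set PC : Finset (Fin (m * m')) → Prop := fun S =>
    S.card ≤ 2 ∧ ∀ b : ℕ, (S.filter fun i : Fin (m * m') => (i : ℕ) / m' = b).card ≤ 1
    with hPC
  have hCset : Ccode m m' = Submodule.span (ZMod 2)
      {c | ∃ S : Finset (Fin (m * m')), PC S ∧ c = mon S} := by
    unfold Ccode
    congr 1
    ext c
    simp only [Set.mem_setOf_eq, hPC, and_assoc]
  -- if `S = {i,j}` with `i ≠ j` and the blocks of `i, j` coincide, then `¬ PC S`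
  have hnotPC : ∀ i j : Fin (m * m'), i ≠ j → (i : ℕ) / m' = (j : ℕ) / m' →
      ¬ PC ({i, j} : Finset (Fin (m * m'))) := by
    intro i j hne hblock hP
    have hi : i ∈ ({i, j} : Finset (Fin (m * m'))).filter
        (fun k : Fin (m * m') => (k : ℕ) / m' = (j : ℕ) / m') :=
      Finset.mem_filter.mpr ⟨by simp, hblock⟩
    have hj : j ∈ ({i, j} : Finset (Fin (m * m'))).filter
        (fun k : Fin (m * m') => (k : ℕ) / m' = (j : ℕ) / m') :=
      Finset.mem_filter.mpr ⟨by simp, rfl⟩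
    have h2 : 1 < (({i, j} : Finset (Fin (m * m'))).filter
        (fun k : Fin (m * m') => (k : ℕ) / m' = (j : ℕ) / m')).card :=
      Finset.one_lt_card.mpr ⟨i, hi, j, hj, hne⟩
    exact absurd (hP.2 ((j : ℕ) / m')) (not_le.mpr h2)
  constructor
  · -- every q_B is in C
    intro B hB
    rw [hCset, qB_eq_Fc]
    apply mem_span_of_coeff
    intro S hS
    by_cases h2 : S.card = 2
    · obtain ⟨i, j, hne, rfl⟩ := Finset.card_eq_two.mp h2
      rcases hne.lt_or_gt with hij | hij
      · rw [qcoef_pair B i j hij]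
        by_contra hBij
        refine hS ⟨by simp [Finset.card_pair hne], fun b => ?_⟩
        have hblock : (i : ℕ) / m' ≠ (j : ℕ) / m' := fun hb => hBij (hB.2 i j hb)
        refine Finset.card_le_one.mpr fun x hx y hy => ?_
        simp only [Finset.mem_filter, Finset.mem_insert, Finset.mem_singleton] at hx hy
        rcases hx.1 with rfl | rfl <;> rcases hy.1 with rfl | rfl
        · rfl
        · exact absurd (hx.2.trans hy.2.symm) hblock
        · exact absurd (hy.2.trans hx.2.symm) hblock
        · rfl
      · rw [Finset.pair_comm i j, qcoef_pair B j i hij]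
        by_contra hBij
        refine hS ⟨by simp [Finset.card_pair hne], fun b => ?_⟩
        have hblock : (j : ℕ) / m' ≠ (i : ℕ) / m' := fun hb => hBij (hB.2 j i hb)
        refine Finset.card_le_one.mpr fun x hx y hy => ?_
        simp only [Finset.mem_filter, Finset.mem_insert, Finset.mem_singleton] at hx hy
        rcases hx.1 with rfl | rfl <;> rcases hy.1 with rfl | rfl
        · rfl
        · exact absurd (hy.2.trans hx.2.symm) hblock
        · exact absurd (hx.2.trans hy.2.symm) hblock
        · rfl
    · exact qcoef_of_card_ne B S h2
  · -- unique decomposition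
    intro c hc
    rw [hCset] at hc
    obtain ⟨a, ha, rfl⟩ := coeff_of_mem_span PC hc
    -- the matrix B extracted from the degree-2 coefficients
    set B : Matrix (Fin (m * m')) (Fin (m * m')) (ZMod 2) := fun i j =>
      if (i : ℕ) / m' = (j : ℕ) / m' then 0 else a {i, j} with hBdef
    -- the degree-≤1 coefficients
    set low : Finset (Fin (m * m')) → ZMod 2 := fun S =>
      if S.card ≤ 1 then a S else 0 with hlow
    have hBisB : isB m m' B := by
      constructor
      · intro i j
        by_cases h : (i : ℕ) / m' = (j : ℕ) / m'
        · rw [hBdef]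
          simp only [if_pos h, if_pos h.symm]
        · rw [hBdef]
          simp only [if_neg h, if_neg (fun hh : (j : ℕ) / m' = (i : ℕ) / m' => h hh.symm)]
          rw [Finset.pair_comm i j]
      · intro i j h
        simp [hBdef, h]
    have hsplit : a = low + qcoef B := by
      funext S
      simp only [Pi.add_apply]
      rcases Nat.lt_or_ge S.card 2 with h | h
      · rw [hlow]
        simp only [if_pos (Nat.lt_succ_iff.mp h)]
        rw [qcoef_of_card_ne B S (by omega), add_zero]
      · have hnle : ¬ S.card ≤ 1 := by omega
        rw [hlow]
        simp only [if_neg hnle, zero_add]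
        rcases Nat.lt_or_ge S.card 3 with h3 | h3
        · -- card = 2
          have h2 : S.card = 2 := by omega
          obtain ⟨i, j, hne, rfl⟩ := Finset.card_eq_two.mp h2
          rcases hne.lt_or_gt with hij | hij
          · rw [qcoef_pair B i j hij, hBdef]
            by_cases hb : (i : ℕ) / m' = (j : ℕ) / m'
            · simp only [if_pos hb]
              exact ha _ (hnotPC i j hne hb)
            · simp only [if_neg hb]
          · rw [Finset.pair_comm i j, qcoef_pair B j i hij, hBdef]
            by_cases hb : (j : ℕ) / m' = (i : ℕ) / m'
            · simp only [if_pos hb]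
              exact ha _ (hnotPC j i hne.symm hb)
            · simp only [if_neg hb]
        · -- card ≥ 3
          rw [qcoef_of_card_ne B S (by omega)]
          exact ha S fun hP => absurd hP.1 (by omega)
    have hrmem : Fc low ∈ RMcode 1 (m * m') := by
      unfold RMcode
      apply mem_span_of_coeff
      intro S hS
      rw [hlow]
      simp only [if_neg hS]
    have hceq : Fc a = Fc low + qB m m' B := by
      rw [hsplit, Fc_add, qB_eq_Fc]
    refine ⟨(B, Fc low), ⟨hBisB, hrmem, hceq⟩, ?_⟩
    rintro ⟨B₂, r₂⟩ ⟨hB₂, hr₂, hc₂⟩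
    have hB₂' : isB m m' B₂ := hB₂
    have hr₂' : r₂ ∈ RMcode 1 (m * m') := hr₂
    have hc₂' : Fc a = r₂ + qB m m' B₂ := hc₂
    clear hB₂ hr₂ hc₂
    unfold RMcode at hr₂'
    obtain ⟨a₂, ha₂, rfl⟩ := coeff_of_mem_span (fun S => S.card ≤ 1) hr₂'
    have hkey : a₂ + qcoef B₂ = low + qcoef B := by
      apply Fc_inj
      rw [Fc_add, Fc_add, ← qB_eq_Fc, ← qB_eq_Fc, ← hc₂']
      exact hceq
    have hBeq : B₂ = B := by
      ext i j
      rcases lt_trichotomy i j with hij | rfl | hij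
      · have := congrFun hkey {i, j}
        simp only [Pi.add_apply] at this
        have hcard : ¬ ({i, j} : Finset (Fin (m * m'))).card ≤ 1 := by
          rw [Finset.card_pair (ne_of_lt hij)]; omega
        rw [ha₂ _ hcard, hlow] at this
        simp only [if_neg hcard, zero_add] at this
        rw [qcoef_pair B₂ i j hij, qcoef_pair B i j hij] at this
        exact this
      · rw [hB₂'.2 i i rfl, hBisB.2 i i rfl]
      · have := congrFun hkey {j, i}
        simp only [Pi.add_apply] at this
        have hcard : ¬ ({j, i} : Finset (Fin (m * m'))).card ≤ 1 := by
          rw [Finset.card_pair (ne_of_lt hij)]; omega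
        rw [ha₂ _ hcard, hlow] at this
        simp only [if_neg hcard, zero_add] at this
        rw [qcoef_pair B₂ j i hij, qcoef_pair B j i hij] at this
        rw [hB₂'.1 i j, hBisB.1 i j]
        exact this
    have hreq : Fc a₂ = Fc low := by
      have h1 : Fc a₂ + qB m m' B = Fc low + qB m m' B := by
        rw [← hBeq, ← hc₂', hceq, hBeq]
      exact add_right_cancel h1
    exact Prod.ext hBeq hreq
end

section
/- Let m, m' ≥ 2, n = m·m', and let a ∈ (Fin n → ZMod 2) be nonzero. Then the projection of C along a equals the set of affine functions with linear part in U_a; that is, { c + (x ↦ c(x + a)) : c ∈ C } = { x ↦ u₀ + Σ_i u(i)·x(i) : u₀ ∈ ZMod 2, u ∈ U_a }. -/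
/-- `U_a = {a·B : B ∈ 𝓑_{m,m'}}` (a `ZMod 2`-subspace of `Fin (m·m') → ZMod 2`). -/
def Ua (m m' : ℕ) (a : Fin (m * m') → ZMod 2) : Set (Fin (m * m') → ZMod 2) :=
  {u | ∃ B, isB m m' B ∧ u = Matrix.vecMul a B}

private lemma key_sum {n : ℕ} (B : Matrix (Fin n) (Fin n) (ZMod 2))
    (hsym : ∀ i j, B i j = B j i) (hdiag : ∀ i, B i i = 0)
    (a x : Fin n → ZMod 2) :
    ∑ p ∈ Finset.univ.filter (fun p : Fin n × Fin n => p.1 < p.2),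
      B p.1 p.2 * (a p.1 * x p.2 + a p.2 * x p.1)
    = ∑ k, Matrix.vecMul a B k * x k := by
  classical
  set P := Finset.univ.filter (fun p : Fin n × Fin n => p.1 < p.2) with hP
  set P' := Finset.univ.filter (fun p : Fin n × Fin n => p.2 < p.1) with hP'
  have h1 : ∑ p ∈ P, B p.1 p.2 * (a p.1 * x p.2 + a p.2 * x p.1)
      = ∑ p ∈ P, B p.1 p.2 * (a p.1 * x p.2) + ∑ p ∈ P, B p.1 p.2 * (a p.2 * x p.1) := by
    simp [mul_add, Finset.sum_add_distrib]
  have h2 : ∑ p ∈ P, B p.1 p.2 * (a p.2 * x p.1)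
      = ∑ p ∈ P', B p.1 p.2 * (a p.1 * x p.2) := by
    refine Finset.sum_nbij' Prod.swap Prod.swap ?_ ?_ ?_ ?_ ?_
    · intro p hp; simp only [hP, hP', Finset.mem_filter, Finset.mem_univ, true_and] at *
      exact hp
    · intro p hp; simp only [hP, hP', Finset.mem_filter, Finset.mem_univ, true_and] at *
      exact hp
    · intro p _; simp
    · intro p _; simp
    · intro p _; simp only [Prod.fst_swap, Prod.snd_swap]; rw [hsym]
  have hdisj : Disjoint P P' := by
    rw [Finset.disjoint_left]
    intro p hp hp'
    simp only [hP, hP', Finset.mem_filter, Finset.mem_univ, true_and] at hp hp'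
    exact absurd hp (not_lt.2 hp'.le)
  have hunion : P ∪ P' = Finset.univ.filter (fun p : Fin n × Fin n => p.1 ≠ p.2) := by
    ext p
    simp only [hP, hP', Finset.mem_union, Finset.mem_filter, Finset.mem_univ, true_and]
    constructor
    · rintro (h | h) <;> [exact h.ne; exact h.ne']
    · intro h; exact h.lt_or_gt
  have h3 : ∑ p ∈ P, B p.1 p.2 * (a p.1 * x p.2) + ∑ p ∈ P', B p.1 p.2 * (a p.1 * x p.2)
      = ∑ p ∈ Finset.univ.filter (fun p : Fin n × Fin n => p.1 ≠ p.2),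
          B p.1 p.2 * (a p.1 * x p.2) := by
    rw [← Finset.sum_union hdisj, hunion]
  have h4 : ∑ p ∈ Finset.univ.filter (fun p : Fin n × Fin n => p.1 ≠ p.2),
        B p.1 p.2 * (a p.1 * x p.2)
      = ∑ p : Fin n × Fin n, B p.1 p.2 * (a p.1 * x p.2) := by
    rw [← Finset.sum_filter_add_sum_filter_not Finset.univ
      (fun p : Fin n × Fin n => p.1 ≠ p.2)]
    have : ∑ p ∈ Finset.univ.filter (fun p : Fin n × Fin n => ¬ p.1 ≠ p.2),
        B p.1 p.2 * (a p.1 * x p.2) = 0 := by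
      apply Finset.sum_eq_zero
      intro p hp
      simp only [Finset.mem_filter, not_not] at hp
      rw [hp.2, hdiag, zero_mul]
    rw [this, add_zero]
  rw [h1, h2, h3, h4, Fintype.sum_prod_type, Finset.sum_comm]
  refine Finset.sum_congr rfl fun j _ => ?_
  simp only [Matrix.vecMul, dotProduct, Finset.sum_mul]
  exact Finset.sum_congr rfl fun i _ => by ring

/-- for nonzero `a`, the projection of `C` along `a` equals the set of
affine functions whose linear part lies in `U_a`. -/
theorem stmt_14 (m m' : ℕ) (hm : 2 ≤ m) (hm' : 2 ≤ m')
    (a : Fin (m * m') → ZMod 2) (ha : a ≠ 0) :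
    {w : (Fin (m * m') → ZMod 2) → ZMod 2 |
        ∃ c ∈ Ccode m m', w = fun x => c x + c (x + a)} =
    {w : (Fin (m * m') → ZMod 2) → ZMod 2 |
        ∃ (u₀ : ZMod 2) (u : Fin (m * m') → ZMod 2), u ∈ Ua m m' a ∧
          w = fun x => u₀ + ∑ i, u i * x i} := by
  classical
  have hB0 : isB m m' 0 := ⟨fun _ _ => rfl, fun _ _ _ => rfl⟩
  ext w
  simp only [Set.mem_setOf_eq]
  constructor
  · rintro ⟨c, hc, rfl⟩
    have hc' : c ∈ Submodule.span (ZMod 2) {c : (Fin (m * m') → ZMod 2) → ZMod 2 |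
        ∃ S : Finset (Fin (m * m')), S.card ≤ 2 ∧
        (∀ b : ℕ, (S.filter fun i : Fin (m * m') => (i : ℕ) / m' = b).card ≤ 1) ∧ c = mon S} := by unfold Ccode at hc; exact hc
    clear hc
    induction hc' using Submodule.span_induction with
    | mem c hcS =>
      obtain ⟨S, hcard, hblock, rfl⟩ := hcS
      have hcases : S.card = 0 ∨ S.card = 1 ∨ S.card = 2 := by omega
      rcases hcases with h0 | h1 | h2
      · -- constant monomial
        rw [Finset.card_eq_zero] at h0
        subst h0
        refine ⟨0, Matrix.vecMul a 0, ⟨0, hB0, rfl⟩, ?_⟩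
        funext x
        simp only [mon, Finset.prod_empty, Matrix.vecMul_zero, Pi.zero_apply, zero_mul,
          Finset.sum_const_zero, add_zero]
        decide
      · obtain ⟨i, rfl⟩ := Finset.card_eq_one.1 h1
        refine ⟨a i, Matrix.vecMul a 0, ⟨0, hB0, rfl⟩, ?_⟩
        funext x
        simp only [mon, Finset.prod_singleton, Pi.add_apply, Matrix.vecMul_zero,
          Pi.zero_apply, zero_mul, Finset.sum_const_zero, add_zero]
        have : ∀ p r : ZMod 2, p + (p + r) = r := by decide
        exact this (x i) (a i)
      · obtain ⟨i, j, hne, rfl⟩ := Finset.card_eq_two.1 h2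
        have hblk : (i : ℕ) / m' ≠ (j : ℕ) / m' := by
          intro hEq
          have h2le : 1 < (({i, j} : Finset (Fin (m * m'))).filter
              fun k : Fin (m * m') => (k : ℕ) / m' = (i : ℕ) / m').card :=
            Finset.one_lt_card.2 ⟨i, by simp, j, by simp [hEq.symm], hne⟩
          exact absurd (hblock ((i : ℕ) / m')) (by omega)
        set B : Matrix (Fin (m * m')) (Fin (m * m')) (ZMod 2) := fun k l =>
          (if k = i ∧ l = j then 1 else 0) + (if k = j ∧ l = i then 1 else 0) with hBdef
        have hBsym : ∀ k l, B k l = B l k := by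
          intro k l
          simp only [hBdef]
          rw [add_comm]
          congr 1 <;> apply if_congr (by tauto) rfl rfl
        have hBblk : ∀ k l : Fin (m * m'), (k : ℕ) / m' = (l : ℕ) / m' → B k l = 0 := by
          intro k l hkl
          simp only [hBdef]
          rw [if_neg, if_neg, add_zero]
          · rintro ⟨rfl, rfl⟩; exact hblk hkl.symm
          · rintro ⟨rfl, rfl⟩; exact hblk hkl
        have hvm : ∀ k, Matrix.vecMul a B k
            = (if k = j then a i else 0) + (if k = i then a j else 0) := by
          intro k
          simp only [Matrix.vecMul, dotProduct, hBdef, mul_add,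
            Finset.sum_add_distrib]
          congr 1
          · by_cases hk : k = j <;>
              simp [hk, Finset.sum_ite_eq' Finset.univ i (fun l => a l)]
          · by_cases hk : k = i <;>
              simp [hk, Finset.sum_ite_eq' Finset.univ j (fun l => a l)]
        refine ⟨a i * a j, Matrix.vecMul a B, ⟨B, ⟨hBsym, hBblk⟩, rfl⟩, ?_⟩
        funext x
        have hsum : ∑ k, Matrix.vecMul a B k * x k = a i * x j + a j * x i := by
          simp only [hvm, add_mul, ite_mul, zero_mul, Finset.sum_add_distrib,
            Finset.sum_ite_eq' Finset.univ j (fun k => a i * x k),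
            Finset.sum_ite_eq' Finset.univ i (fun k => a j * x k),
            Finset.mem_univ, if_true]
        rw [hsum]
        simp only [mon, Finset.prod_insert (by simp [hne] : i ∉ ({j} : Finset (Fin (m * m')))), Finset.prod_singleton,
          Pi.add_apply]
        have : ∀ p q r s : ZMod 2, p * q + (p + r) * (q + s)
            = r * s + (r * q + s * p) := by decide
        exact this (x i) (x j) (a i) (a j)
    | zero =>
      refine ⟨0, Matrix.vecMul a 0, ⟨0, hB0, rfl⟩, ?_⟩
      funext x
      simp
    | add c c' hcmem hcmem' ih ih' =>
      obtain ⟨u₀, u, ⟨B, hB, rfl⟩, hw⟩ := ih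
      obtain ⟨v₀, v, ⟨B', hB', rfl⟩, hw'⟩ := ih'
      refine ⟨u₀ + v₀, Matrix.vecMul a (B + B'),
        ⟨B + B', ⟨fun i j => by simp [hB.1 i j, hB'.1 i j],
          fun i j hij => by simp [hB.2 i j hij, hB'.2 i j hij]⟩, rfl⟩, ?_⟩
      funext x
      have h1 : c x + c (x + a) = u₀ + ∑ i, Matrix.vecMul a B i * x i := congrFun hw x
      have h2 : c' x + c' (x + a) = v₀ + ∑ i, Matrix.vecMul a B' i * x i := congrFun hw' x
      simp only [Pi.add_apply, Matrix.vecMul_add]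
      calc c x + c' x + (c (x + a) + c' (x + a))
          = (c x + c (x + a)) + (c' x + c' (x + a)) := by ring
        _ = (u₀ + ∑ i, Matrix.vecMul a B i * x i)
            + (v₀ + ∑ i, Matrix.vecMul a B' i * x i) := by rw [h1, h2]
        _ = u₀ + v₀ + ∑ i, (Matrix.vecMul a B i + Matrix.vecMul a B' i) * x i := by
            simp only [add_mul, Finset.sum_add_distrib]; ring
    | smul r c hcmem ih =>
      obtain ⟨u₀, u, ⟨B, hB, rfl⟩, hw⟩ := ih
      have hvm : Matrix.vecMul a (r • B) = r • Matrix.vecMul a B := by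
        funext k
        simp only [Matrix.vecMul, dotProduct, Matrix.smul_apply, smul_eq_mul,
          Pi.smul_apply, Finset.mul_sum]
        exact Finset.sum_congr rfl fun l _ => by ring
      refine ⟨r * u₀, Matrix.vecMul a (r • B),
        ⟨r • B, ⟨fun i j => by simp [hB.1 i j],
          fun i j hij => by simp [hB.2 i j hij]⟩, rfl⟩, ?_⟩
      funext x
      have h1 : c x + c (x + a) = u₀ + ∑ i, Matrix.vecMul a B i * x i := congrFun hw x
      simp only [Pi.smul_apply, smul_eq_mul, hvm]
      calc r * c x + r * c (x + a) = r * (c x + c (x + a)) := by ring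
        _ = r * (u₀ + ∑ i, Matrix.vecMul a B i * x i) := by rw [h1]
        _ = r * u₀ + ∑ i, r * Matrix.vecMul a B i * x i := by
            rw [mul_add, Finset.mul_sum]
            congr 1
            exact Finset.sum_congr rfl fun i _ => by ring
  · rintro ⟨u₀, u, ⟨B, ⟨hsym, hblk⟩, rfl⟩, rfl⟩
    have hdiag : ∀ i, B i i = 0 := fun i => hblk i i rfl
    obtain ⟨i₀, hi₀⟩ := Function.ne_iff.1 ha
    simp only [Pi.zero_apply] at hi₀
    have hai₀ : a i₀ = 1 := by
      have : ∀ t : ZMod 2, t ≠ 0 → t = 1 := by decide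
      exact this (a i₀) hi₀
    set P := Finset.univ.filter (fun p : Fin (m * m') × Fin (m * m') => p.1 < p.2) with hP
    set K := u₀ + ∑ p ∈ P, B p.1 p.2 * (a p.1 * a p.2) with hK
    refine ⟨(∑ p ∈ P, B p.1 p.2 • mon {p.1, p.2}) + K • mon {i₀}, ?_, ?_⟩
    · apply Submodule.add_mem
      · apply Submodule.sum_mem
        intro p hp
        by_cases hBp : B p.1 p.2 = 0
        · rw [hBp, zero_smul]; exact Submodule.zero_mem _
        · have hne : p.1 ≠ p.2 := (Finset.mem_filter.1 hp).2.ne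
          have hblkne : (p.1 : ℕ) / m' ≠ (p.2 : ℕ) / m' :=
            fun h => hBp (hblk _ _ h)
          apply Submodule.smul_mem
          apply Submodule.subset_span
          refine ⟨{p.1, p.2}, ?_, ?_, rfl⟩
          · exact (Finset.card_insert_le _ _).trans (by simp)
          · intro b
            rw [Finset.card_le_one]
            intro i hi j hj
            simp only [Finset.mem_filter, Finset.mem_insert, Finset.mem_singleton] at hi hj
            rcases hi.1 with rfl | rfl <;> rcases hj.1 with rfl | rfl
            · rfl
            · exact absurd (hi.2.trans hj.2.symm) hblkne
            · exact absurd (hj.2.trans hi.2.symm) hblkne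
            · rfl
      · apply Submodule.smul_mem
        apply Submodule.subset_span
        refine ⟨{i₀}, by simp, fun b => (Finset.card_filter_le _ _).trans (by simp), rfl⟩
    · funext x
      have hmon2 : ∀ p ∈ P, mon {p.1, p.2} x + mon {p.1, p.2} (x + a)
          = a p.1 * x p.2 + a p.2 * x p.1 + a p.1 * a p.2 := by
        intro p hp
        have hne : p.1 ≠ p.2 := (Finset.mem_filter.1 hp).2.ne
        simp only [mon, Finset.prod_insert (by simp [hne] : p.1 ∉ ({p.2} : Finset (Fin (m * m')))),
          Finset.prod_singleton, Pi.add_apply]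
        have : ∀ p q r s : ZMod 2, p * q + (p + r) * (q + s)
            = r * q + s * p + r * s := by decide
        exact this (x p.1) (x p.2) (a p.1) (a p.2)
      simp only [Pi.add_apply, Finset.sum_apply, Pi.smul_apply, smul_eq_mul]
      symm
      calc (∑ p ∈ P, B p.1 p.2 * mon {p.1, p.2} x) + K * mon {i₀} x
            + ((∑ p ∈ P, B p.1 p.2 * mon {p.1, p.2} (x + a)) + K * mon {i₀} (x + a))
          = (∑ p ∈ P, B p.1 p.2 * (mon {p.1, p.2} x + mon {p.1, p.2} (x + a)))
            + K * (mon {i₀} x + mon {i₀} (x + a)) := by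
            simp only [mul_add, Finset.sum_add_distrib]
            try ring
        _ = (∑ p ∈ P, B p.1 p.2 * (a p.1 * x p.2 + a p.2 * x p.1 + a p.1 * a p.2)) + K := by
            congr 1
            · exact Finset.sum_congr rfl fun p hp => by rw [hmon2 p hp]
            · simp only [mon, Finset.prod_singleton, Pi.add_apply, hai₀]
              have : ∀ t K : ZMod 2, K * (t + (t + 1)) = K := by decide
              exact this (x i₀) K
        _ = (∑ p ∈ P, B p.1 p.2 * (a p.1 * x p.2 + a p.2 * x p.1))
            + (∑ p ∈ P, B p.1 p.2 * (a p.1 * a p.2)) + K := by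
            simp only [mul_add, Finset.sum_add_distrib]
            try ring
        _ = u₀ + ∑ i, Matrix.vecMul a B i * x i := by
            rw [key_sum B hsym hdiag a x, hK]
            have : ∀ A S u₀ : ZMod 2, A + S + (u₀ + S) = u₀ + A := by decide
            exact this _ _ _
end

section
/- Let m, m' ≥ 2, n = m·m', and let a ∈ (Fin n → ZMod 2) be nonzero. If the support of a (the set of indices i with a(i) = 1) is contained in one of the blocks B_1, …, B_m, then the ZMod 2-dimension of U_a equals m'·(m−1); otherwise, the dimension of U_a equals m·m' − 1. -/
open Matrix Module LinearMap

theorem dotProduct_vecMul_self_eq_zero {ι R : Type*} [Fintype ι] [CommSemiring R] [CharP R 2]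
    {B : Matrix ι ι R} (hB : B.IsSymm) (hdiag : ∀ i, B i i = 0) (a : ι → R) :
    a ᵥ* B ⬝ᵥ a = 0 := by
  have hpairs : a ᵥ* B ⬝ᵥ a = ∑ p : ι × ι, a p.1 * B p.1 p.2 * a p.2 := by
    rw [Fintype.sum_prod_type, Finset.sum_comm]
    simp only [dotProduct, vecMul, Finset.sum_mul]
  rw [hpairs]
  refine Finset.sum_ninvolution Prod.swap (fun p => ?_) (fun p hp => ?_)
    (fun _ => Finset.mem_univ _) Prod.swap_swap
  · rw [Prod.fst_swap, Prod.snd_swap, hB.apply p.1 p.2,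
      show a p.2 * B p.1 p.2 * a p.1 = a p.1 * B p.1 p.2 * a p.2 by ring]
    exact CharTwo.add_self_eq_zero _
  · intro hswap
    obtain ⟨i, j⟩ := p
    obtain rfl : j = i := congrArg Prod.fst hswap
    simp [hdiag] at hp

section

variable {m m' : ℕ}

def zeroDiagBlockSymm (m m' : ℕ) :
    Submodule (ZMod 2) (Matrix (Fin (m * m')) (Fin (m * m')) (ZMod 2)) where
  carrier := {B | isB m m' B}
  add_mem' := fun ⟨hBs, hBd⟩ ⟨hCs, hCd⟩ =>
    ⟨fun i j => by simp [hBs i j, hCs i j], fun i j h => by simp [hBd i j h, hCd i j h]⟩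
  zero_mem' := ⟨fun _ _ => rfl, fun _ _ _ => rfl⟩
  smul_mem' := fun c _ ⟨hs, hd⟩ => ⟨fun i j => by simp [hs i j], fun i j h => by simp [hd i j h]⟩

theorem span_Ua_eq_map (a : Fin (m * m') → ZMod 2) :
    Submodule.span (ZMod 2) (Ua m m' a) =
      (zeroDiagBlockSymm m m').map (vecMulBilin (ZMod 2) (ZMod 2) a) := by
  convert Submodule.span_eq _
  ext u
  exact ⟨fun ⟨B, hB, hu⟩ => ⟨B, hB, hu.symm⟩, fun ⟨B, hB, hu⟩ => ⟨B, hB, hu.symm⟩⟩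

theorem add_dotProduct_smul_single_mem {a : Fin (m * m') → ZMod 2} {i : Fin (m * m')}
    (hi : a i = 1) {u : Fin (m * m') → ZMod 2}
    (hu : ∀ k : Fin (m * m'), (k : ℕ) / m' = (i : ℕ) / m' → u k = 0) :
    u + (a ⬝ᵥ u) • Pi.single i 1 ∈
      (zeroDiagBlockSymm m m').map (vecMulBilin (ZMod 2) (ZMod 2) a) := by
  have hzero : ∀ x y : Fin (m * m'), (x : ℕ) / m' = (y : ℕ) / m' →
      (Pi.single i 1 : Fin (m * m') → ZMod 2) x * u y = 0 := by
    intro x y hxy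
    rcases eq_or_ne x i with rfl | hx
    · rw [hu y hxy.symm, mul_zero]
    · rw [Pi.single_eq_of_ne hx, zero_mul]
  refine ⟨vecMulVec (Pi.single i 1) u + vecMulVec u (Pi.single i 1),
    ⟨fun x y => ?_, fun x y hxy => ?_⟩, ?_⟩
  · simp only [Matrix.add_apply, vecMulVec_apply]
    ring
  · simp only [Matrix.add_apply, vecMulVec_apply, hzero x y hxy, hzero y x hxy.symm,
      mul_comm (u x), add_zero]
  · simp [vecMul_add, vecMul_vecMulVec, hi, add_comm]

theorem map_le_ker_dotProduct (a : Fin (m * m') → ZMod 2) :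
    (zeroDiagBlockSymm m m').map (vecMulBilin (ZMod 2) (ZMod 2) a) ≤
      ker (dotProductBilin (ZMod 2) (ZMod 2) a) := by
  rintro _ ⟨B, ⟨hs, hd⟩, rfl⟩
  rw [mem_ker, dotProductBilin_apply_apply, vecMulBilin_apply, dotProduct_comm]
  exact dotProduct_vecMul_self_eq_zero (IsSymm.ext fun i j => hs j i) (fun i => hd i i rfl) a

theorem map_eq_ker_dotProduct {a : Fin (m * m') → ZMod 2} {i j : Fin (m * m')} (hi : a i = 1)
    (hj : a j = 1) (hij : (i : ℕ) / m' ≠ (j : ℕ) / m') :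
    (zeroDiagBlockSymm m m').map (vecMulBilin (ZMod 2) (ZMod 2) a) =
      ker (dotProductBilin (ZMod 2) (ZMod 2) a) := by
  set V := (zeroDiagBlockSymm m m').map (vecMulBilin (ZMod 2) (ZMod 2) a)
  refine le_antisymm (map_le_ker_dotProduct a) fun u hu => ?_
  rw [mem_ker, dotProductBilin_apply_apply] at hu
  set w : Fin (m * m') → ZMod 2 := fun k => if (k : ℕ) / m' = (i : ℕ) / m' then u k else 0
  set v : Fin (m * m') → ZMod 2 := u - w
  have hv : v + (a ⬝ᵥ v) • Pi.single i 1 ∈ V :=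
    add_dotProduct_smul_single_mem hi fun k hk => by simp [v, w, hk]
  have hw : w + (a ⬝ᵥ w) • Pi.single j 1 ∈ V :=
    add_dotProduct_smul_single_mem hj fun k hk => by simp [w, hk, hij.symm]
  have hji : Pi.single j 1 + Pi.single i 1 ∈ V := by
    have := add_dotProduct_smul_single_mem hi (u := Pi.single j 1)
      fun k hk => by rw [Pi.single_eq_of_ne]; rintro rfl; exact hij hk.symm
    rwa [dotProduct_single_one, hj, one_smul] at this
  have hvw : a ⬝ᵥ w = a ⬝ᵥ v := by
    rw [dotProduct_sub, hu, zero_sub, CharTwo.neg_eq]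
  convert V.add_mem (V.add_mem hv hw) (V.smul_mem (a ⬝ᵥ v) hji) using 1
  -- `u = (v + s • eᵢ) + (w + s • eⱼ) + s • (eⱼ + eᵢ)` with `s = a ⬝ᵥ v = a ⬝ᵥ w` and `2 = 0`
  rw [hvw]
  match_scalars <;> ring_nf <;> simp [CharTwo.two_eq_zero]

def blockEmb (b : Fin m) (j : Fin m') : Fin (m * m') := finProdFinEquiv (b, j)

theorem blockEmb_injective (b : Fin m) : Function.Injective (blockEmb (m' := m') b) :=
  fun _ _ h => congrArg Prod.snd (finProdFinEquiv.injective h)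

theorem div_eq_iff_exists_blockEmb {b : Fin m} {i : Fin (m * m')} :
    (i : ℕ) / m' = b ↔ ∃ j, blockEmb b j = i := by
  simp only [blockEmb, ← Fin.coe_divNat, Fin.val_inj, ← finProdFinEquiv.eq_symm_apply,
    finProdFinEquiv_symm_apply, Prod.ext_iff]
  exact ⟨fun h => ⟨i.modNat, h.symm, rfl⟩, fun ⟨_, h, _⟩ => h.symm⟩

theorem mem_ker_funLeft_blockEmb_iff {b : Fin m} {u : Fin (m * m') → ZMod 2} :
    u ∈ ker (funLeft (ZMod 2) (ZMod 2) (blockEmb b)) ↔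
      ∀ k : Fin (m * m'), (k : ℕ) / m' = b → u k = 0 := by
  simp [funext_iff, funLeft_apply, div_eq_iff_exists_blockEmb]

theorem map_eq_ker_funLeft_blockEmb {a : Fin (m * m') → ZMod 2} {b : Fin m} {i : Fin (m * m')}
    (hi : a i = 1) (hsupp : ∀ k : Fin (m * m'), a k ≠ 0 → (k : ℕ) / m' = b) :
    (zeroDiagBlockSymm m m').map (vecMulBilin (ZMod 2) (ZMod 2) a) =
      ker (funLeft (ZMod 2) (ZMod 2) (blockEmb b)) := by
  apply le_antisymm
  · rintro _ ⟨B, ⟨-, hd⟩, rfl⟩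
    rw [mem_ker_funLeft_blockEmb_iff]
    intro k hk
    show ∑ l, a l * B l k = 0
    refine Finset.sum_eq_zero fun l _ => ?_
    by_cases hl : a l = 0
    · rw [hl, zero_mul]
    · rw [hd l k ((hsupp l hl).trans hk.symm), mul_zero]
  · intro u hu
    rw [mem_ker_funLeft_blockEmb_iff] at hu
    have hau : a ⬝ᵥ u = 0 := Finset.sum_eq_zero fun k _ => by
      by_cases hk : a k = 0
      · rw [hk, zero_mul]
      · rw [hu k (hsupp k hk), mul_zero]
    simpa [hau] using add_dotProduct_smul_single_mem hi
      fun k hk => hu k (hk.trans (hsupp i (by simp [hi])))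

theorem finrank_ker_funLeft_of_injective {K ι κ : Type*} [Field K] [Fintype ι] [Fintype κ]
    {f : ι → κ} (hf : Function.Injective f) :
    finrank K (ker (funLeft K K f)) = Fintype.card κ - Fintype.card ι := by
  have := finrank_range_add_finrank_ker (funLeft K K f)
  rw [range_eq_top.mpr (funLeft_surjective_of_injective _ _ _ hf), finrank_top, finrank_pi,
    finrank_pi] at this
  omega

end

theorem stmt_15_general (m m' : ℕ)
    (a : Fin (m * m') → ZMod 2) (ha : a ≠ 0) :
    ((∃ b : ℕ, b < m ∧ ∀ i : Fin (m * m'), a i ≠ 0 → (i : ℕ) / m' = b) →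
      Module.finrank (ZMod 2) (Submodule.span (ZMod 2) (Ua m m' a)) = m' * (m - 1)) ∧
    ((¬ ∃ b : ℕ, b < m ∧ ∀ i : Fin (m * m'), a i ≠ 0 → (i : ℕ) / m' = b) →
      Module.finrank (ZMod 2) (Submodule.span (ZMod 2) (Ua m m' a)) = m * m' - 1) := by
  obtain ⟨i, hi⟩ : ∃ i, a i = 1 := by
    obtain ⟨i, hi⟩ := Function.ne_iff.mp ha
    exact ⟨i, Fin.eq_one_of_ne_zero _ hi⟩
  rw [span_Ua_eq_map]
  constructor
  · rintro ⟨b, hb, hsupp⟩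
    rw [map_eq_ker_funLeft_blockEmb (b := ⟨b, hb⟩) hi hsupp,
      finrank_ker_funLeft_of_injective (blockEmb_injective _), Fintype.card_fin, Fintype.card_fin,
      Nat.mul_sub_one, mul_comm]
  · intro hnot
    push Not at hnot
    obtain ⟨j, hj, hij⟩ := hnot _ (Fin.coe_divNat i ▸ i.divNat.isLt)
    rw [map_eq_ker_dotProduct hi (Fin.eq_one_of_ne_zero _ hj) (Ne.symm hij)]
    have hne : dotProductBilin (ZMod 2) (ZMod 2) a ≠ 0 := fun h => by
      simpa [hi] using LinearMap.congr_fun h (Pi.single i 1)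
    have := Module.Dual.finrank_ker_add_one_of_ne_zero hne
    rw [finrank_fin_fun] at this
    omega

/-- for nonzero `a`, `dim U_a = m'·(m−1)` if the support of `a` lies in one
of the blocks `B_1, …, B_m`, and `dim U_a = m·m' − 1` otherwise. -/
theorem stmt_15 (m m' : ℕ) (hm : 2 ≤ m) (hm' : 2 ≤ m')
    (a : Fin (m * m') → ZMod 2) (ha : a ≠ 0) :
    ((∃ b : ℕ, b < m ∧ ∀ i : Fin (m * m'), a i ≠ 0 → (i : ℕ) / m' = b) →
      Module.finrank (ZMod 2) (Submodule.span (ZMod 2) (Ua m m' a)) = m' * (m - 1)) ∧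
    ((¬ ∃ b : ℕ, b < m ∧ ∀ i : Fin (m * m'), a i ≠ 0 → (i : ℕ) / m' = b) →
      Module.finrank (ZMod 2) (Submodule.span (ZMod 2) (Ua m m' a)) = m * m' - 1) :=
  stmt_15_general m m' a ha
end

section
/- Let m, m' ≥ 2 and n = m·m'. If a ∈ (Fin n → ZMod 2) is nonzero and the support of a is contained in the block B_j for some j ∈ {1,…,m}, then U_a = { u ∈ (Fin n → ZMod 2) : u(i) = 0 for every i ∈ B_j }, the subspace of vectors vanishing on block B_j. -/
/-- if `a ≠ 0` and the support of `a` is contained in block `B_j`, then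
`U_a` is exactly the subspace of vectors vanishing on block `B_j`. -/
theorem stmt_19 (m m' : ℕ) (hm : 2 ≤ m) (hm' : 2 ≤ m')
    (a : Fin (m * m') → ZMod 2) (ha : a ≠ 0)
    (j : ℕ) (hj : j < m) (hsupp : ∀ i : Fin (m * m'), a i ≠ 0 → (i : ℕ) / m' = j) :
    Ua m m' a = {u | ∀ i : Fin (m * m'), (i : ℕ) / m' = j → u i = 0} := by
  ext u
  constructor
  · rintro ⟨B, ⟨hsym, hblk⟩, rfl⟩ i hi
    show (Matrix.vecMul a B) i = 0
    simp only [Matrix.vecMul, dotProduct]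
    apply Finset.sum_eq_zero
    intro k _
    by_cases hk : a k = 0
    · simp [hk]
    · rw [hblk k i (by rw [hsupp k hk, hi]), mul_zero]
  · intro hu
    obtain ⟨i₀, hi₀⟩ : ∃ i, a i ≠ 0 := by
      by_contra h; push_neg at h; exact ha (funext fun i => h i)
    have ha1 : a i₀ = 1 := by
      have : ∀ x : ZMod 2, x ≠ 0 → x = 1 := by decide
      exact this _ hi₀
    have hij : (i₀ : ℕ) / m' = j := hsupp i₀ hi₀
    refine ⟨fun k i => if k = i₀ then u i else if i = i₀ then u k else 0, ⟨?_, ?_⟩, ?_⟩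
    · intro p q
      by_cases hp : p = i₀ <;> by_cases hq : q = i₀ <;> simp [hp, hq]
    · intro p q h
      by_cases hp : p = i₀
      · simp only [hp, if_pos rfl]
        exact hu q (by rw [← h, hp, hij])
      · by_cases hq : q = i₀
        · simp only [if_neg hp, hq, if_pos rfl]
          exact hu p (by rw [h, hq, hij])
        · simp [hp, hq]
    · funext i
      show u i = ∑ k, a k * _
      by_cases hi : i = i₀
      · subst hi
        rw [hu i hij]
        symm
        apply Finset.sum_eq_zero
        intro k _
        by_cases hk : k = i
        · simp [hk, hu i hij]
        · by_cases hak : a k = 0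
          · simp [hak]
          · simp [hk, hu k (hsupp k hak)]
      · rw [Finset.sum_eq_single i₀]
        · simp [ha1, hi]
        · intro k _ hk
          simp [hk, hi]
        · intro h; exact absurd (Finset.mem_univ i₀) h
end
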